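/- The group homomorphism φ : H → H determined by φ(a) = a², φ(b) = b, φ(s) = s⁻¹bs² is injective. -/

import Mathlib

/-- Generators `a`, `b`, `s` of the presented group `H`. -/
inductive Gen3 : Type
  | a | b | s

open FreeGroup in
/-- The relators `b⁻¹ * a * b * a⁻¹` and `s⁻¹ * a² * s * a⁻⁴`. -/
def relsH : Set (FreeGroup Gen3) :=
  {(of Gen3.b)⁻¹ * of Gen3.a * of Gen3.b * (of Gen3.a)⁻¹,
   (of Gen3.s)⁻¹ * (of Gen3.a) ^ 2 * of Gen3.s * ((of Gen3.a) ^ 4)⁻¹}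

/-- The group `H = ⟨a, b, s ∣ b⁻¹ab = a, s⁻¹a²s = a⁴⟩`. -/
abbrev H : Type := PresentedGroup relsH

/-- The images of the generators `a`, `b`, `s` in `H`. -/
def ha : H := PresentedGroup.of Gen3.a
def hb : H := PresentedGroup.of Gen3.b
def hs : H := PresentedGroup.of Gen3.s

/-!
`H` is the HNN extension of `ℤ² = ⟨a, b⟩` along `a² ↦ a⁴`, with stable letter `t = s⁻¹`
(Mathlib's convention is `t x t⁻¹ = e x`). Transported to this HNN extension, `φ` doubles the
`a`-coordinate of the base and sends `t ↦ t t b⁻¹ t⁻¹`, so each `t ^ u` goes to `t c t^u d t⁻¹`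
with `c, d ∈ {1, b, b⁻¹}`. In the image of a reduced word the only pinches are
`t⁻¹ (double g) t = g` for `g ∈ ⟨a²⟩`; performing them leaves a reduced word that is nonempty
when the original one was, and Britton's lemma shows that such a word is not trivial.
-/
open Multiplicative HNNExtension HNNExtension.NormalWord

namespace HNNExtension

variable {G : Type*} [Group G] {A B : Subgroup G} {φ : A ≃* B}

theorem injective_of_forall_reducedWord_prod_ne_one {K : Type*} [Group K]
    (f : HNNExtension G A B φ →* K) (hof : Function.Injective (f.comp of))
    (hw : ∀ w : ReducedWord G A B, w.toList ≠ [] → f (w.prod φ) ≠ 1) :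
    Function.Injective f := by
  rw [injective_iff_map_eq_one]
  intro x hx
  obtain ⟨d⟩ := TransversalPair.nonempty G A B
  set w := (NormalWord.equiv φ d x).toReducedWord
  have hwx : w.prod φ = x := (NormalWord.equiv φ d).symm_apply_apply x
  have hnil : w.toList = [] := by_contra fun h => hw w h (hwx ▸ hx)
  have hheadx : of w.head = x := by simpa [ReducedWord.prod, hnil] using hwx
  rw [← hheadx, ← map_one (f.comp of)] at hx
  rw [← hheadx, hof hx, map_one]

variable (A B) in
def IsReducedList (L : List (ℤˣ × G)) : Prop :=
  L.IsChain fun a b => a.2 ∈ toSubgroup A B a.1 → a.1 = b.1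

variable (φ)

def listProd (L : List (ℤˣ × G)) : HNNExtension G A B φ :=
  (L.map fun x => t ^ (x.1 : ℤ) * of x.2).prod

@[simp] theorem listProd_nil : listProd φ [] = 1 := rfl

@[simp] theorem listProd_cons (x : ℤˣ × G) (L : List (ℤˣ × G)) :
    listProd φ (x :: L) = t ^ (x.1 : ℤ) * of x.2 * listProd φ L := by
  simp [listProd]

end HNNExtension

theorem commute_ha_hb : Commute ha hb := by
  have h := PresentedGroup.one_of_mem (rels := relsH) (Set.mem_insert _ _)
  simp only [map_mul, map_inv] at h
  rw [mul_inv_eq_one, mul_assoc, inv_mul_eq_iff_eq_mul] at h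
  exact h

theorem inv_hs_mul_ha_sq_mul_hs : hs⁻¹ * ha ^ 2 * hs = ha ^ 4 := by
  have h := PresentedGroup.one_of_mem (rels := relsH) (Set.mem_insert_of_mem _ rfl)
  simp only [map_mul, map_inv, map_pow] at h
  exact mul_inv_eq_one.mp h

abbrev Z2 : Type := Multiplicative ℤ × Multiplicative ℤ

def a₀ : Z2 := (ofAdd 1, 1)
def b₀ : Z2 := (1, ofAdd 1)

def double : Z2 →* Z2 := (powMonoidHom 2).prodMap (MonoidHom.id _)

theorem double_injective : Function.Injective double :=
  (pow_left_injective two_ne_zero).prodMap Function.injective_id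

theorem double_a₀_sq : double (a₀ ^ 2) = a₀ ^ 4 := by ext <;> simp [double, a₀, ← pow_mul]

def A₂ : Subgroup Z2 := Subgroup.zpowers (a₀ ^ 2)
def A₄ : Subgroup Z2 := A₂.map double

theorem snd_eq_one_of_mem_toSubgroup {u : ℤˣ} {g : Z2} (hg : g ∈ toSubgroup A₂ A₄ u) :
    g.2 = 1 := by
  have hA₂ : A₂ ≤ (MonoidHom.snd _ _).ker :=
    Subgroup.zpowers_le.mpr (MonoidHom.mem_ker.mpr (by simp [a₀]))
  rcases Int.units_eq_one_or u with rfl | rfl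
  · exact MonoidHom.mem_ker.mp (hA₂ hg)
  · obtain ⟨g, hg, rfl⟩ := hg
    exact MonoidHom.mem_ker.mp (hA₂ hg)

noncomputable def doubleEquiv : A₂ ≃* A₄ := A₂.equivMapOfInjective double double_injective

theorem coe_doubleEquiv (g : A₂) : (doubleEquiv g : Z2) = double g := rfl

abbrev E : Type := HNNExtension Z2 A₂ A₄ doubleEquiv

theorem inv_t_mul_of_double_mul_t {g : Z2} (hg : g ∈ A₂) :
    (t⁻¹ * of (double g) * t : E) = of g := by
  have := equiv_symm_eq_conj (φ := doubleEquiv) (doubleEquiv ⟨g, hg⟩)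
  simpa [coe_doubleEquiv] using this.symm

theorem t_mul_of_a₀_sq_mul_inv_t : (t * of (a₀ ^ 2) * t⁻¹ : E) = of (a₀ ^ 4) := by
  have := equiv_eq_conj (φ := doubleEquiv) ⟨a₀ ^ 2, Subgroup.mem_zpowers _⟩
  rw [← this, coe_doubleEquiv, double_a₀_sq]

noncomputable def toEGen : Gen3 → E
  | .a => of a₀
  | .b => of b₀
  | .s => t⁻¹

theorem lift_toEGen_eq_one : ∀ r ∈ relsH, FreeGroup.lift toEGen r = 1 := by
  rintro r (rfl | rfl)
  · simp only [toEGen, map_mul, map_inv, FreeGroup.lift_apply_of]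
    rw [mul_inv_eq_one, mul_assoc, ((Commute.all a₀ b₀).map of).eq, inv_mul_cancel_left]
  · simp only [map_mul, map_inv, map_pow, FreeGroup.lift_apply_of, toEGen, inv_inv]
    rw [← map_pow, ← map_pow, t_mul_of_a₀_sq_mul_inv_t, mul_inv_cancel]

noncomputable def toE : H →* E := PresentedGroup.toGroup lift_toEGen_eq_one

theorem toE_ha : toE ha = of a₀ := PresentedGroup.toGroup.of _
theorem toE_hb : toE hb = of b₀ := PresentedGroup.toGroup.of _
theorem toE_hs : toE hs = t⁻¹ := PresentedGroup.toGroup.of _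

def liftZ2 : Z2 →* H :=
  (zpowersHom H ha).noncommCoprod (zpowersHom H hb) fun _ _ => commute_ha_hb.zpow_zpow _ _

theorem liftZ2_apply (g : Z2) : liftZ2 g = ha ^ toAdd g.1 * hb ^ toAdd g.2 := rfl

theorem liftZ2_a₀ : liftZ2 a₀ = ha := by simp [liftZ2_apply, a₀]
theorem liftZ2_b₀ : liftZ2 b₀ = hb := by simp [liftZ2_apply, b₀]

theorem inv_hs_mul_liftZ2 (g : A₂) : hs⁻¹ * liftZ2 g = liftZ2 (doubleEquiv g) * hs⁻¹ := by
  obtain ⟨g, hg⟩ := g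
  obtain ⟨k, rfl⟩ := Subgroup.mem_zpowers_iff.mp hg
  have h : SemiconjBy hs⁻¹ (ha ^ 2) (ha ^ 4) := by
    rw [SemiconjBy, ← inv_hs_mul_ha_sq_mul_hs]; group
  have hk := h.zpow_right k
  rw [coe_doubleEquiv, Subgroup.coe_mk, map_zpow double, double_a₀_sq, map_zpow, map_zpow,
    map_pow, map_pow, liftZ2_a₀]
  exact hk

noncomputable def ofE : E →* H := HNNExtension.lift liftZ2 hs⁻¹ inv_hs_mul_liftZ2

theorem ofE_toE (x : H) : ofE (toE x) = x := by
  suffices ofE.comp toE = MonoidHom.id H from DFunLike.congr_fun this x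
  refine PresentedGroup.ext fun i => ?_
  cases i
  · show ofE (toE ha) = ha
    rw [toE_ha, ofE, lift_of, liftZ2_a₀]
  · show ofE (toE hb) = hb
    rw [toE_hb, ofE, lift_of, liftZ2_b₀]
  · show ofE (toE hs) = hs
    rw [toE_hs, map_inv, ofE, lift_t, inv_inv]

theorem toE_liftZ2 (g : Z2) : toE (liftZ2 g) = of g := by
  have hg : a₀ ^ toAdd g.1 * b₀ ^ toAdd g.2 = g := by ext <;> simp [a₀, b₀]
  rw [liftZ2_apply, map_mul, map_zpow, map_zpow, toE_ha, toE_hb, ← map_zpow, ← map_zpow,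
    ← map_mul, hg]

def imageFst (u : ℤˣ) : Z2 := if u = 1 then 1 else b₀
def imageSnd (u : ℤˣ) : Z2 := if u = 1 then b₀⁻¹ else 1

@[simp] theorem imageFst_one : imageFst 1 = 1 := rfl
@[simp] theorem imageFst_neg_one : imageFst (-1) = b₀ := rfl
@[simp] theorem imageSnd_one : imageSnd 1 = b₀⁻¹ := rfl
@[simp] theorem imageSnd_neg_one : imageSnd (-1) = 1 := rfl

theorem eq_one_of_imageFst_mem {u : ℤˣ} (h : imageFst u ∈ toSubgroup A₂ A₄ 1) : 1 = u := by
  rcases Int.units_eq_one_or u with rfl | rfl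
  · rfl
  · simpa [b₀] using snd_eq_one_of_mem_toSubgroup h

theorem eq_neg_one_of_imageSnd_mem {u : ℤˣ} (h : imageSnd u ∈ toSubgroup A₂ A₄ u) : u = -1 := by
  rcases Int.units_eq_one_or u with rfl | rfl
  · simpa [b₀] using snd_eq_one_of_mem_toSubgroup h
  · rfl

theorem imageSnd_mul_mul_imageFst_not_mem {u u' : ℤˣ} {g : Z2} (hg : g ∈ A₂)
    (hgu : g ∈ toSubgroup A₂ A₄ u → u = u') :
    imageSnd u * g * imageFst u' ∉ toSubgroup A₂ A₄ u := by
  intro h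
  have hg2 : g.2 = 1 := snd_eq_one_of_mem_toSubgroup (u := 1) hg
  have h2 := snd_eq_one_of_mem_toSubgroup h
  rcases Int.units_eq_one_or u with rfl | rfl
  · obtain rfl := hgu hg
    simp [hg2, b₀] at h2
  · rcases Int.units_eq_one_or u' with rfl | rfl
    · rw [imageSnd_neg_one, imageFst_one, one_mul, mul_one] at h
      exact absurd (hgu h) (by decide)
    · simp [hg2, b₀] at h2

theorem map_t_zpow {Ψ : E →* E} (ht : Ψ t = t * t * of b₀⁻¹ * t⁻¹) (u : ℤˣ) :
    Ψ (t ^ (u : ℤ)) = t * of (imageFst u) * t ^ (u : ℤ) * of (imageSnd u) * t⁻¹ := by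
  rcases Int.units_eq_one_or u with rfl | rfl
  · simp [ht]
  · simp [ht, mul_assoc]

theorem exists_isReducedList_map_listProd {Ψ : E →* E}
    (hof : ∀ g, Ψ (of g) = of (double g)) (ht : Ψ t = t * t * of b₀⁻¹ * t⁻¹) :
    ∀ L : List (ℤˣ × Z2), IsReducedList A₂ A₄ L → ∃ L', IsReducedList A₂ A₄ L' ∧
      Ψ (listProd doubleEquiv L) = listProd doubleEquiv L' ∧
      L'.head? = L.head?.map fun x => (1, imageFst x.1)
  | [], _ => ⟨[], List.isChain_nil, by simp, rfl⟩
  | (u, g) :: M, hL => by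
    obtain ⟨hgM, hM⟩ := List.isChain_cons.mp hL
    obtain ⟨LM, hLM, hΨM, hLMhead⟩ := exists_isReducedList_map_listProd hof ht M hM
    have hΨ : Ψ (listProd doubleEquiv ((u, g) :: M)) =
        t * of (imageFst u) * t ^ (u : ℤ) * of (imageSnd u) * t⁻¹ * of (double g) *
          listProd doubleEquiv LM := by
      rw [listProd_cons, map_mul, map_mul, map_t_zpow ht, hof, hΨM]
    by_cases hpinch : g ∈ A₂ ∧ M ≠ []
    · obtain ⟨hg, hMne⟩ := hpinch
      obtain ⟨⟨u', g'⟩, M', rfl⟩ := List.exists_cons_of_ne_nil hMne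
      obtain ⟨rest, rfl⟩ : ∃ rest, LM = (1, imageFst u') :: rest := by
        cases LM <;> simp_all
      refine ⟨(1, imageFst u) :: (u, imageSnd u * g * imageFst u') :: rest, ?_, ?_, rfl⟩
      · refine List.isChain_cons_cons.mpr ⟨eq_one_of_imageFst_mem, List.isChain_cons.mpr
          ⟨fun _ _ h => absurd h (imageSnd_mul_mul_imageFst_not_mem hg (hgM _ rfl)),
            (List.isChain_cons.mp hLM).2⟩⟩
      · rw [hΨ]
        simp only [listProd_cons, Units.val_one, zpow_one, map_mul]
        rw [← inv_t_mul_of_double_mul_t hg]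
        group
    · refine ⟨(1, imageFst u) :: (u, imageSnd u) :: (-1, double g) :: LM, ?_, ?_, rfl⟩
      · refine List.isChain_cons_cons.mpr ⟨eq_one_of_imageFst_mem, List.isChain_cons_cons.mpr
          ⟨eq_neg_one_of_imageSnd_mem, List.isChain_cons.mpr ⟨?_, hLM⟩⟩⟩
        intro x hx hdg
        obtain rfl : M = [] := by
          simpa [(Subgroup.mem_map_iff_mem double_injective).mp hdg] using hpinch
        obtain rfl : LM = [] := List.head?_eq_none_iff.mp hLMhead
        simp at hx
      · rw [hΨ]
        simp only [listProd_cons, Units.val_one, Units.val_neg, zpow_one, zpow_neg]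
        group

theorem injective_of_map_of_eq_of_map_t_eq {Ψ : E →* E}
    (hof : ∀ g, Ψ (of g) = of (double g)) (ht : Ψ t = t * t * of b₀⁻¹ * t⁻¹) :
    Function.Injective Ψ := by
  have hΨof : Ψ.comp of = of.comp double := MonoidHom.ext hof
  refine injective_of_forall_reducedWord_prod_ne_one Ψ ?_ fun w hw hΨw => hw ?_
  · rw [hΨof]
    exact (of_injective doubleEquiv).comp double_injective
  obtain ⟨L, hL, hΨL, hhead⟩ := exists_isReducedList_map_listProd hof ht w.toList w.chain
  let w' : ReducedWord Z2 A₂ A₄ := ⟨double w.head, L, hL⟩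
  have hw' : w'.prod doubleEquiv = 1 := by
    rw [← hΨw, ReducedWord.prod, ReducedWord.prod, map_mul, hof]
    exact congrArg _ hΨL.symm
  have hLnil : L = [] :=
    ReducedWord.toList_eq_nil_of_mem_of_range doubleEquiv w' (hw' ▸ one_mem _)
  simpa [hLnil] using hhead

theorem map_liftZ2 {φ : H →* H} (hφa : φ ha = ha ^ 2) (hφb : φ hb = hb) (g : Z2) :
    φ (liftZ2 g) = liftZ2 (double g) := by
  have h2 : toAdd (double g).1 = 2 * toAdd g.1 := by simp [double]
  rw [liftZ2_apply, liftZ2_apply, map_mul, map_zpow, map_zpow, hφa, hφb, h2, zpow_mul]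
  rfl

/-- The endomorphism `φ` of `H` determined by `φ(a) = a²`, `φ(b) = b`,
`φ(s) = s⁻¹bs²` is injective. -/
theorem phi_injective (φ : H →* H)
    (hφa : φ ha = ha ^ 2) (hφb : φ hb = hb) (hφs : φ hs = hs⁻¹ * hb * hs ^ 2) :
    Function.Injective φ := by
  let Ψ : E →* E := toE.comp (φ.comp ofE)
  have hof (g : Z2) : Ψ (of g) = of (double g) := by
    simp [Ψ, ofE, map_liftZ2 hφa hφb, toE_liftZ2]
  have ht : Ψ t = t * t * of b₀⁻¹ * t⁻¹ := by
    simp [Ψ, ofE, hφs, toE_hs, toE_hb, pow_two, mul_assoc]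
  have hΨ : Ψ ∘ toE = toE ∘ φ := funext fun x => by simp [Ψ, ofE_toE]
  refine Function.Injective.of_comp (f := toE) ?_
  rw [← hΨ]
  exact (injective_of_map_of_eq_of_map_t_eq hof ht).comp (Function.LeftInverse.injective ofE_toE)
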